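/- Let p be a prime, α ≥ 1 an integer, and g(t) = b_n t^n + ... + b_1 t + b_0 a polynomial with integer coefficients of degree n ≥ 1 such that b_n is not divisible by p^(α - ⌊α/2⌋). Then there exist constants C_n > 0 and ρ_n ∈ (0,1), depending only on n (not on α or p), such that the number of t ∈ [1, p^α] with g(t) ≡ 0 (mod p^α) is at most C_n · p^((1-ρ_n)α). -/
import Mathlib

open Polynomial Matrix Finset in
lemma aux_dvd_prod (p α n : ℕ) (g : Polynomial ℤ) (hdeg : g.natDegree = n)
    (t : Fin (n+1) → ℤ) (ht : ∀ i, ((p:ℤ))^α ∣ g.eval (t i)) :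
    ((p:ℤ))^α ∣ g.leadingCoeff * ∏ i : Fin (n+1), ∏ j ∈ Finset.Ioi i, (t j - t i) := by
  classical
  set V : Matrix (Fin (n+1)) (Fin (n+1)) ℤ := (Matrix.vandermonde t)ᵀ with hV
  set M : Matrix (Fin (n+1)) (Fin (n+1)) ℤ :=
    V.updateRow (Fin.last n) (fun j => g.eval (t j)) with hM
  have hrow : (fun j => g.eval (t j)) = ∑ k : Fin (n+1), g.coeff k • V k := by
    funext j
    simp only [Finset.sum_apply, Pi.smul_apply, smul_eq_mul, hV, Matrix.transpose_apply,
      Matrix.vandermonde_apply]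
    rw [Polynomial.eval_eq_sum_range' (by omega : g.natDegree < n+1),
      ← Fin.sum_univ_eq_sum_range (fun k => g.coeff k * t j ^ k)]
  have hdet : M.det = g.leadingCoeff * V.det := by
    rw [hM, hrow, Matrix.det_updateRow_sum]
    simp [Polynomial.leadingCoeff, hdeg, Fin.val_last]
  have h1 : ((p:ℤ))^α ∣ M.det := by
    have h0 : (M.map (Int.castRingHom (ZMod (p^α)))).det = 0 := by
      apply Matrix.det_eq_zero_of_row_eq_zero (Fin.last n)
      intro j
      simp only [Matrix.map_apply, hM, Matrix.updateRow_self, Int.coe_castRingHom]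
      rw [ZMod.intCast_zmod_eq_zero_iff_dvd]
      exact_mod_cast ht j
    have h2 : ((Int.castRingHom (ZMod (p^α))) M.det) = 0 := by
      rw [RingHom.map_det]; exact h0
    have := (ZMod.intCast_zmod_eq_zero_iff_dvd M.det (p^α)).mp h2
    exact_mod_cast this
  rw [hdet] at h1
  rwa [hV, Matrix.det_transpose, Matrix.det_vandermonde] at h1

lemma aux_pair (n p α : ℕ) (hp : p.Prime) (hα : 1 ≤ α) (g : Polynomial ℤ)
    (hdeg : g.natDegree = n) (hn : 1 ≤ n)
    (hlead : ¬ ((p:ℤ)^(α - α/2) ∣ g.leadingCoeff))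
    (s B : ℕ) (hB : B = ∑ i : Fin (n+1), (Finset.Ioi i).card)
    (hBs : B * (s - 1) ≤ α / 2) (hs1 : 1 ≤ s)
    (t : Fin (n+1) → ℤ) (htinj : Function.Injective t)
    (ht : ∀ i, ((p:ℤ))^α ∣ g.eval (t i)) :
    ∃ i j : Fin (n+1), i < j ∧ ((p:ℤ))^s ∣ (t j - t i) := by
  classical
  by_contra hcon
  push_neg at hcon
  have key := aux_dvd_prod p α n g hdeg t ht
  have hg0 : g.leadingCoeff ≠ 0 := by
    rw [Polynomial.leadingCoeff_ne_zero]
    intro h; rw [h] at hdeg; simp at hdeg; omega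
  set v : ℤ → ℕ := fun x => x.natAbs.factorization p with hv
  have hdvd_iff : ∀ (k : ℕ) (x : ℤ), x ≠ 0 → (((p:ℤ))^k ∣ x ↔ k ≤ v x) := by
    intro k x hx
    rw [← Int.natAbs_dvd_natAbs]
    simp only [Int.natAbs_pow, Int.natAbs_natCast]
    exact Nat.Prime.pow_dvd_iff_le_factorization hp (Int.natAbs_ne_zero.mpr hx)
  have hvlead : v g.leadingCoeff < α - α/2 := by
    by_contra h; push_neg at h
    exact hlead ((hdvd_iff _ _ hg0).mpr h)
  have hsub : ∀ i : Fin (n+1), ∀ j ∈ Finset.Ioi i, (t j - t i) ≠ 0 := by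
    intro i j hj
    rw [Finset.mem_Ioi] at hj
    exact sub_ne_zero.mpr (fun h => (ne_of_gt hj) (htinj h))
  have hpairv : ∀ i : Fin (n+1), ∀ j ∈ Finset.Ioi i, v (t j - t i) ≤ s - 1 := by
    intro i j hj
    have hne := hsub i j hj
    have h2 : ¬ (s ≤ v (t j - t i)) :=
      fun hle => hcon i j (Finset.mem_Ioi.mp hj) ((hdvd_iff s _ hne).mpr hle)
    omega
  -- v of a finset product
  have hvprod : ∀ (sf : Finset (Fin (n+1))) (f : Fin (n+1) → ℤ), (∀ i ∈ sf, f i ≠ 0) →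
      v (∏ i ∈ sf, f i) = ∑ i ∈ sf, v (f i) := by
    intro sf f hf
    simp only [hv]
    rw [show (∏ i ∈ sf, f i).natAbs = ∏ i ∈ sf, (f i).natAbs from map_prod Int.natAbsHom f sf]
    rw [Nat.factorization_prod (fun x hx => Int.natAbs_ne_zero.mpr (hf x hx))]
    simp [Finsupp.finset_sum_apply]
  have hP0 : ∀ i : Fin (n+1), (∏ j ∈ Finset.Ioi i, (t j - t i)) ≠ 0 :=
    fun i => Finset.prod_ne_zero_iff.mpr (hsub i)
  have hP : (∏ i : Fin (n+1), ∏ j ∈ Finset.Ioi i, (t j - t i)) ≠ 0 :=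
    Finset.prod_ne_zero_iff.mpr (fun i _ => hP0 i)
  have hkey2 : α ≤ v (g.leadingCoeff * ∏ i : Fin (n+1), ∏ j ∈ Finset.Ioi i, (t j - t i)) :=
    (hdvd_iff α _ (mul_ne_zero hg0 hP)).mp key
  have hvmul : v (g.leadingCoeff * ∏ i : Fin (n+1), ∏ j ∈ Finset.Ioi i, (t j - t i))
      = v g.leadingCoeff + v (∏ i : Fin (n+1), ∏ j ∈ Finset.Ioi i, (t j - t i)) := by
    simp only [hv, Int.natAbs_mul]
    rw [Nat.factorization_mul (Int.natAbs_ne_zero.mpr hg0) (Int.natAbs_ne_zero.mpr hP)]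
    simp
  have hvP : v (∏ i : Fin (n+1), ∏ j ∈ Finset.Ioi i, (t j - t i)) ≤ B * (s - 1) := by
    rw [hvprod Finset.univ _ (fun i _ => hP0 i)]
    calc ∑ i : Fin (n+1), v (∏ j ∈ Finset.Ioi i, (t j - t i))
        = ∑ i : Fin (n+1), ∑ j ∈ Finset.Ioi i, v (t j - t i) := by
          refine Finset.sum_congr rfl (fun i _ => ?_)
          exact hvprod _ _ (hsub i)
      _ ≤ ∑ i : Fin (n+1), (Finset.Ioi i).card * (s - 1) := by
          refine Finset.sum_le_sum (fun i _ => ?_)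
          calc ∑ j ∈ Finset.Ioi i, v (t j - t i) ≤ ∑ j ∈ Finset.Ioi i, (s-1) :=
                Finset.sum_le_sum (hpairv i)
            _ = (Finset.Ioi i).card * (s - 1) := by rw [Finset.sum_const, smul_eq_mul]
      _ = B * (s - 1) := by rw [hB, ← Finset.sum_mul]
  omega


/-- Counting solutions of a polynomial congruence mod a prime power:
if the leading coefficient of `g` (of degree `n ≥ 1`) is not divisible by
`p^(α - ⌊α/2⌋)`, then the number of `t ∈ [1, p^α]` with `g(t) ≡ 0 (mod p^α)`
is at most `C_n · p^((1-ρ_n)·α)`, with `C_n, ρ_n` depending only on `n`. -/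
theorem stmt_0 (n : ℕ) (hn : 1 ≤ n) :
    ∃ C ρ : ℝ, 0 < C ∧ 0 < ρ ∧ ρ < 1 ∧
      ∀ (p α : ℕ), p.Prime → 1 ≤ α →
        ∀ g : Polynomial ℤ, g.natDegree = n →
          ¬ ((p : ℤ) ^ (α - α / 2) ∣ g.leadingCoeff) →
          (((Finset.Icc (1 : ℤ) ((p : ℤ) ^ α)).filter
              (fun t => ((p : ℤ) ^ α) ∣ g.eval t)).card : ℝ)
            ≤ C * (p : ℝ) ^ ((1 - ρ) * (α : ℝ)) := by
  classical
  set B : ℕ := ∑ i : Fin (n+1), (Finset.Ioi i).card with hB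
  have hB1 : 1 ≤ B := by
    have h0 : (0 : Fin (n+1)) < 1 := by
      rw [Fin.lt_def, Fin.val_zero, Fin.val_one']
      rw [Nat.mod_eq_of_lt (by omega)]
      omega
    have hmem : (1 : Fin (n+1)) ∈ Finset.Ioi (0 : Fin (n+1)) := Finset.mem_Ioi.mpr h0
    calc 1 ≤ (Finset.Ioi (0 : Fin (n+1))).card := Finset.card_pos.mpr ⟨_, hmem⟩
      _ ≤ ∑ i : Fin (n+1), (Finset.Ioi i).card :=
        Finset.single_le_sum (f := fun i : Fin (n+1) => (Finset.Ioi i).card)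
          (fun i _ => Nat.zero_le _) (Finset.mem_univ 0)
  have hBR : (1:ℝ) ≤ B := by exact_mod_cast hB1
  have hBpos : (0:ℝ) < 2*(B:ℝ) := by linarith
  refine ⟨n, 1/(2*(B:ℝ)), by exact_mod_cast hn, by exact div_pos one_pos hBpos, ?_, ?_⟩
  · rw [div_lt_one hBpos]; linarith
  intro p α hp hα g hdeg hlead
  set s : ℕ := (α/2 + B)/B with hs
  have hs1 : 1 ≤ s := (Nat.one_le_div_iff (by omega)).mpr (by omega)
  have hsB : B * (s-1) ≤ α/2 := by
    have h1 : s * B ≤ α/2 + B := Nat.div_mul_le_self _ _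
    have h2 : B * s = B * (s-1) + B := by
      have : s - 1 + 1 = s := by omega
      calc B * s = B * ((s-1)+1) := by rw [this]
        _ = B * (s-1) + B := by ring
    have h3 : B * s ≤ α/2 + B := by rw [mul_comm]; exact h1
    omega
  have hslow : α/2 + 1 ≤ s * B := by
    have h4 := Nat.lt_div_mul_add (a := α/2 + B) (b := B) (by omega)
    have h5 : (α/2 + B)/B * B = s * B := rfl
    omega
  have hsα : s ≤ α := by
    have h6 : α/2 + B ≤ (α/2+1) * B := by
      have h7 : α/2 ≤ α/2 * B := Nat.le_mul_of_pos_right _ (by omega)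
      have h8 : (α/2+1)*B = α/2*B + B := by ring
      omega
    have h9 : s ≤ α/2+1 := by
      calc s ≤ ((α/2+1)*B)/B := Nat.div_le_div_right h6
        _ = α/2+1 := Nat.mul_div_cancel _ (by omega)
    omega
  set q : ℤ := (p:ℤ)^s with hq
  have hppos : (0:ℤ) < p := by exact_mod_cast hp.pos
  have hqpos : (0:ℤ) < q := by positivity
  set S := (Finset.Icc (1 : ℤ) ((p : ℤ) ^ α)).filter
      (fun t => ((p : ℤ) ^ α) ∣ g.eval t) with hSdef
  have himg : (S.image (fun t => t % q)).card ≤ n := by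
    by_contra hc
    push_neg at hc
    obtain ⟨T, hTsub, hTcard⟩ := Finset.exists_subset_card_eq
      (show n+1 ≤ (S.image (fun t => t % q)).card from hc)
    set b : Fin (n+1) → ℤ := fun i => ((T.orderIsoOfFin hTcard) i : ℤ) with hb
    have hbinj : Function.Injective b :=
      fun i j hij => (T.orderIsoOfFin hTcard).injective (Subtype.ext hij)
    have hbmem : ∀ i, b i ∈ S.image (fun t => t % q) :=
      fun i => hTsub (T.orderIsoOfFin hTcard i).2
    set u : Fin (n+1) → ℤ := fun i => Function.invFunOn (fun t => t % q) ↑S (b i) with hu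
    have hex : ∀ i, ∃ a ∈ (↑S : Set ℤ), a % q = b i := by
      intro i
      obtain ⟨a, haS, ha⟩ := Finset.mem_image.mp (hbmem i)
      exact ⟨a, haS, ha⟩
    have huS : ∀ i, u i ∈ S := fun i => Function.invFunOn_mem (hex i)
    have huq : ∀ i, u i % q = b i := fun i => Function.invFunOn_eq (hex i)
    have huinj : Function.Injective u := by
      intro i j hij
      apply hbinj
      rw [← huq i, ← huq j]
      simp only [hu] at hij ⊢
      rw [hij]
    have hudvd : ∀ i, ((p:ℤ))^α ∣ g.eval (u i) := fun i => (Finset.mem_filter.mp (huS i)).2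
    obtain ⟨i, j, hij, hdvd⟩ :=
      aux_pair n p α hp hα g hdeg hn hlead s B hB hsB hs1 u huinj hudvd
    have hmodeq : u i % q = u j % q := Int.modEq_iff_dvd.mpr hdvd
    have hbij : b i = b j := by rw [← huq i, ← huq j]; exact hmodeq
    exact absurd (hbinj hbij) (ne_of_lt hij)
  have hfiber : ∀ r ∈ S.image (fun t => t % q),
      (S.filter (fun a => a % q = r)).card ≤ p^(α - s) := by
    intro r _
    have hmap : ∀ a ∈ S.filter (fun a => a % q = r),
        (a - 1) / q ∈ Finset.Icc (0:ℤ) ((p:ℤ)^(α-s) - 1) := by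
      intro a ha
      obtain ⟨haS, har⟩ := Finset.mem_filter.mp ha
      obtain ⟨ha1, ha2⟩ := Finset.mem_Icc.mp (Finset.mem_filter.mp haS).1
      rw [Finset.mem_Icc]
      refine ⟨Int.ediv_nonneg (by omega) (le_of_lt hqpos), ?_⟩
      have hpow : ((p:ℤ))^α = q * (p:ℤ)^(α-s) := by
        rw [hq, ← pow_add]; congr 1; omega
      have h3 : a - 1 ≤ q * ((p:ℤ)^(α-s) - 1) + (q - 1) := by
        rw [mul_sub]; omega
      calc (a-1)/q ≤ (q * ((p:ℤ)^(α-s) - 1) + (q-1))/q := Int.ediv_le_ediv hqpos h3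
        _ = (p:ℤ)^(α-s) - 1 := by
          rw [add_comm, mul_comm, Int.add_mul_ediv_right _ _ (ne_of_gt hqpos),
            Int.ediv_eq_zero_of_lt (by omega) (by omega), zero_add]
    have hinj : Set.InjOn (fun a => (a-1)/q) ↑(S.filter (fun a => a % q = r)) := by
      intro a ha a' ha' hq'
      simp only [Finset.coe_filter, Set.mem_setOf_eq] at ha ha'
      have har := ha.2
      have har' := ha'.2
      have hmod : (a - 1) % q = (a' - 1) % q := by
        rw [Int.sub_emod, Int.sub_emod a', har, har']
      have hq2 : (a-1)/q = (a'-1)/q := hq'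
      have e1 := Int.mul_ediv_add_emod (a-1) q
      have e2 := Int.mul_ediv_add_emod (a'-1) q
      have : a - 1 = a' - 1 := by
        conv_lhs => rw [← e1]
        conv_rhs => rw [← e2]
        rw [hq2, hmod]
      omega
    calc (S.filter (fun a => a % q = r)).card
        ≤ (Finset.Icc (0:ℤ) ((p:ℤ)^(α-s) - 1)).card :=
          Finset.card_le_card_of_injOn _ hmap hinj
      _ = p^(α-s) := by
          rw [Int.card_Icc]
          norm_num
          exact_mod_cast rfl
  have hcard : S.card ≤ p^(α-s) * n := by
    calc S.card ≤ p^(α-s) * (S.image (fun t => t % q)).card :=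
        Finset.card_le_mul_card_image S _ hfiber
      _ ≤ p^(α-s) * n := Nat.mul_le_mul_left _ himg
  have hp1 : (1:ℝ) ≤ p := by exact_mod_cast hp.one_lt.le
  calc (S.card : ℝ) ≤ (p:ℝ)^(α-s) * n := by exact_mod_cast hcard
    _ = (n:ℝ) * (p:ℝ) ^ (((α - s : ℕ)):ℝ) := by rw [mul_comm, Real.rpow_natCast]
    _ ≤ (n:ℝ) * (p:ℝ) ^ ((1 - 1/(2*(B:ℝ))) * (α:ℝ)) := by
        apply mul_le_mul_of_nonneg_left _ (by positivity)
        apply Real.rpow_le_rpow_of_exponent_le hp1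
        have hcast : ((α - s : ℕ):ℝ) = (α:ℝ) - s := by
          rw [Nat.cast_sub hsα]
        rw [hcast]
        have hnat : α ≤ 2*(s*B) := by
          have h2 : α ≤ 2*(α/2) + 1 := by omega
          omega
        have h2Bs : (α:ℝ) ≤ 2*(B:ℝ)*(s:ℝ) := by
          have : (α:ℝ) ≤ 2*((s:ℝ)*(B:ℝ)) := by exact_mod_cast hnat
          linarith
        rw [sub_mul, one_mul]
        have hfrac : (1/(2*(B:ℝ))) * (α:ℝ) ≤ (s:ℝ) := by
          rw [div_mul_eq_mul_div, one_mul, div_le_iff₀ hBpos]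
          linarith
        linarith
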